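/- arXiv:2402.05343 — 2 statements merged into one kernel-verified Lean document; each statement's English description precedes it below -/
import Mathlib

section
/- Let 𝓡 be a reaction network on d species equipped with rate constants κ_{y→y'} > 0, and suppose R = (y*_1 → y*_2, y*_2 → y*_3, …, y*_M → y*_1) is a strong tier-1 cycle along a tier sequence {x_n} of 𝓡. Then for every ρ with 0 < ρ < min_{y→y' ∈ 𝓡} κ_{y→y'}, there exists N such that for all n ≥ N, ∏_{m=1}^{M} [ λ_{y*_m → y*_{m+1}}(x^m_n) / ( Σ_{y→y' ∈ 𝓡} λ_{y→y'}(x^m_n) − ρ ) ] > 1 (with y*_{M+1} = y*_1), where in particular each denominator is positive. -/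
open Filter Finset

/-- A reaction network on `d` species: every reaction has a nonnegative source complex and
a nonnegative product complex, and the source differs from the product. -/
def IsRN (d : ℕ) (Rn : Finset ((Fin d → ℤ) × (Fin d → ℤ))) : Prop :=
  ∀ r ∈ Rn, (∀ i, 0 ≤ r.1 i) ∧ (∀ i, 0 ≤ r.2 i) ∧ r.1 ≠ r.2

/-- Mass-action intensity `λ_y(x) = ∏ i, x_i!/(x_i - y_i)!` if `x ≥ y` componentwise, else `0`. -/
def intensity (d : ℕ) (y x : Fin d → ℤ) : ℕ :=
  if ∀ i, y i ≤ x i then ∏ i : Fin d, Nat.descFactorial (x i).toNat ((y i).toNat) else 0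

/-- Cyclic successor on `{1, …, M}`: `cyc M m = m + 1` for `m < M` and `cyc M M = 1`. -/
def cyc (M m : ℕ) : ℕ := if m = M then 1 else m + 1

/-- `xshift d ystar x m n = x^m_n = x_n + ∑_{j=1}^{m-1} (y*_{j+1} - y*_j)`. -/
def xshift (d : ℕ) (ystar : ℕ → Fin d → ℤ) (x : ℕ → Fin d → ℤ) (m n : ℕ) : Fin d → ℤ :=
  fun i => x n i + ∑ j ∈ Finset.Ico 1 m, (ystar (j + 1) i - ystar j i)

/-- The ordered list `(y*_1 → y*_2, …, y*_M → y*_1)` consists of reactions of the network. -/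
def IsCycleIn (d : ℕ) (Rn : Finset ((Fin d → ℤ) × (Fin d → ℤ))) (M : ℕ)
    (ystar : ℕ → Fin d → ℤ) : Prop :=
  ∀ m, 1 ≤ m → m ≤ M → (ystar m, ystar (cyc M m)) ∈ Rn

/-- Condition (ii) of a strong tier-1 cycle, with explicit witness `m0`. -/
def TierLimits (d : ℕ) (Rn : Finset ((Fin d → ℤ) × (Fin d → ℤ))) (M : ℕ)
    (ystar : ℕ → Fin d → ℤ) (x : ℕ → Fin d → ℤ) (m0 : ℕ) : Prop :=
  ∀ m, 1 ≤ m → m ≤ M → ∀ y y' : Fin d → ℤ, (y, y') ∈ Rn →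
    (y, y') ≠ (ystar m, ystar (cyc M m)) →
    Tendsto (fun n =>
        ((intensity d (ystar m0) (xshift d ystar x m0 n) : ℝ) *
          (intensity d y (xshift d ystar x m n) : ℝ)) /
          (intensity d (ystar m) (xshift d ystar x m n) : ℝ))
      atTop (nhds 0)

/-- `R = (y*_1 → y*_2, …, y*_M → y*_1)` is a strong tier-1 cycle along `x`. -/
def IsStrongT1Cycle (d : ℕ) (Rn : Finset ((Fin d → ℤ) × (Fin d → ℤ))) (M : ℕ)
    (ystar : ℕ → Fin d → ℤ) (x : ℕ → Fin d → ℤ) : Prop :=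
  IsCycleIn d Rn M ystar ∧
  (∀ n, 0 < intensity d (ystar 1) (x n)) ∧
  ∃ m0, 1 ≤ m0 ∧ m0 ≤ M ∧ TierLimits d Rn M ystar x m0

/-- `y` is a source complex of the network. -/
def IsSourceIn (d : ℕ) (Rn : Finset ((Fin d → ℤ) × (Fin d → ℤ))) (y : Fin d → ℤ) : Prop :=
  ∃ y', (y, y') ∈ Rn

/-- `y` is a complex (source or product) of the network. -/
def ComplexOf (d : ℕ) (Rn : Finset ((Fin d → ℤ) × (Fin d → ℤ))) (y : Fin d → ℤ) : Prop :=
  ∃ r ∈ Rn, r.1 = y ∨ r.2 = y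

/-- Tier sequence of a reaction network. -/
def IsTierSeq (d : ℕ) (Rn : Finset ((Fin d → ℤ) × (Fin d → ℤ)))
    (x : ℕ → Fin d → ℤ) : Prop :=
  (∀ n i, 0 ≤ x n i) ∧
  (∃ i, Tendsto (fun n => x n i) atTop atTop) ∧
  (∀ i, (Tendsto (fun n => x n i) atTop atTop ∧ Monotone fun n => x n i) ∨
      (∃ c : ℤ, ∀ n, x n i = c)) ∧
  (∀ y y' : Fin d → ℤ, IsSourceIn d Rn y → IsSourceIn d Rn y' →
    (Tendsto (fun n => (intensity d y (x n) : ℝ) / (intensity d y' (x n) : ℝ)) atTop atTop ∨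
      ∃ c : ℝ, Tendsto (fun n => (intensity d y (x n) : ℝ) / (intensity d y' (x n) : ℝ))
        atTop (nhds c)))

/-- One reaction step: some reaction `y → y'` with `y ≤ a` fires, giving `b = a + y' - y`. -/
def ReactStep (d : ℕ) (Rn : Finset ((Fin d → ℤ) × (Fin d → ℤ)))
    (a b : Fin d → ℤ) : Prop :=
  ∃ r ∈ Rn, (∀ i, r.1 i ≤ a i) ∧ b = fun i => a i + (r.2 i - r.1 i)

/-- `w` is reachable from `z` by finitely many reaction steps. -/
def Reachable (d : ℕ) (Rn : Finset ((Fin d → ℤ) × (Fin d → ℤ)))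
    (z w : Fin d → ℤ) : Prop :=
  Relation.ReflTransGen (ReactStep d Rn) z w

/-- Weak reversibility: every reaction lies on a directed cycle of reactions. -/
def WeaklyReversible (d : ℕ) (Rn : Finset ((Fin d → ℤ) × (Fin d → ℤ))) : Prop :=
  ∀ r ∈ Rn, ∃ (K : ℕ) (ys : ℕ → Fin d → ℤ), 2 ≤ K ∧
    ys 1 = r.1 ∧ ys 2 = r.2 ∧
    (∀ j, 1 ≤ j → j < K → (ys j, ys (j + 1)) ∈ Rn) ∧
    (ys K, ys 1) ∈ Rn


private lemma telescope_aux (g : ℕ → ℤ) : ∀ m : ℕ, 1 ≤ m →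
    ∑ j ∈ Finset.Ico 1 m, (g (j + 1) - g j) = g m - g 1 := by
  intro m hm
  induction m with
  | zero => omega
  | succ k ih =>
    rcases Nat.lt_or_ge 1 (k + 1) with h | h
    · have hk : 1 ≤ k := by omega
      rw [Finset.sum_Ico_succ_top hk, ih hk]; ring
    · have hk0 : k = 0 := by omega
      subst hk0; simp

private lemma intensity_pos {d : ℕ} {y x : Fin d → ℤ} (h : ∀ i, y i ≤ x i) :
    0 < intensity d y x := by
  unfold intensity
  rw [if_pos h]
  apply Finset.prod_pos
  intro i _
  rcases Nat.eq_zero_or_pos ((x i).toNat.descFactorial ((y i).toNat)) with hp | hp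
  · exfalso
    have h1 := Nat.descFactorial_eq_zero_iff_lt.mp hp
    have h2 := Int.toNat_le_toNat (h i)
    omega
  · exact hp

private lemma intensity_le_iff {d : ℕ} {y x : Fin d → ℤ} (h : 0 < intensity d y x) :
    ∀ i, y i ≤ x i := by
  by_contra hc
  push_neg at hc
  have : intensity d y x = 0 := by
    unfold intensity
    rw [if_neg]
    push_neg
    obtain ⟨i, hi⟩ := hc
    exact ⟨i, hi⟩
  omega

/-- Along a strong tier-1 cycle on a tier sequence, for every `0 < ρ < min κ` the product
`∏_{m=1}^M λ_{y*_m → y*_{m+1}}(x^m_n) / (Σ_{y→y'} λ_{y→y'}(x^m_n) - ρ)` eventually exceeds `1`,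
each denominator being positive. -/
theorem stmt4 {d M : ℕ} (hd : 1 ≤ d) (hM : 1 ≤ M)
    (Rn : Finset ((Fin d → ℤ) × (Fin d → ℤ))) (hRn : IsRN d Rn)
    (κ : ((Fin d → ℤ) × (Fin d → ℤ)) → ℝ) (hκ : ∀ r ∈ Rn, 0 < κ r)
    (ystar : ℕ → Fin d → ℤ) (x : ℕ → Fin d → ℤ)
    (htier : IsTierSeq d Rn x)
    (hcycle : IsStrongT1Cycle d Rn M ystar x) :
    ∀ ρ : ℝ, 0 < ρ → (∀ r ∈ Rn, ρ < κ r) →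
      ∃ N : ℕ, ∀ n, N ≤ n →
        (∀ m ∈ Finset.Icc 1 M,
          0 < (∑ r ∈ Rn, κ r * (intensity d r.1 (xshift d ystar x m n) : ℝ)) - ρ) ∧
        1 < ∏ m ∈ Finset.Icc 1 M,
          (κ (ystar m, ystar (cyc M m)) *
              (intensity d (ystar m) (xshift d ystar x m n) : ℝ)) /
            ((∑ r ∈ Rn, κ r * (intensity d r.1 (xshift d ystar x m n) : ℝ)) - ρ) := by
  obtain ⟨hcyc, hpos1, m0, hm01, hm0M, htl⟩ := hcycle
  intro ρ hρ0 hρκ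
  have hy1x : ∀ n i, ystar 1 i ≤ x n i := fun n i => intensity_le_iff (hpos1 n) i
  have hshift : ∀ m, 1 ≤ m → ∀ n i,
      xshift d ystar x m n i = x n i + (ystar m i - ystar 1 i) := by
    intro m hm n i
    have ht := telescope_aux (fun j => ystar j i) m hm
    show x n i + _ = _
    rw [ht]
  have hsrcle : ∀ m, 1 ≤ m → m ≤ M → ∀ n i, ystar m i ≤ xshift d ystar x m n i := by
    intro m h1 h2 n i
    rw [hshift m h1 n i]
    have h3 := hy1x n i
    linarith
  have hIpos : ∀ m, 1 ≤ m → m ≤ M → ∀ n,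
      0 < intensity d (ystar m) (xshift d ystar x m n) :=
    fun m h1 h2 n => intensity_pos (hsrcle m h1 h2 n)
  have hI1 : ∀ m, 1 ≤ m → m ≤ M → ∀ n,
      (1:ℝ) ≤ (intensity d (ystar m) (xshift d ystar x m n) : ℝ) := by
    intro m h1 h2 n
    exact_mod_cast hIpos m h1 h2 n
  have hκrm : ∀ m, 1 ≤ m → m ≤ M → 0 < κ (ystar m, ystar (cyc M m)) :=
    fun m h1 h2 => hκ _ (hcyc m h1 h2)
  have hDE : ∀ m, 1 ≤ m → m ≤ M → ∀ n,
      (∑ r ∈ Rn, κ r * (intensity d r.1 (xshift d ystar x m n) : ℝ))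
        = κ (ystar m, ystar (cyc M m)) * (intensity d (ystar m) (xshift d ystar x m n) : ℝ)
          + ∑ r ∈ Rn.erase (ystar m, ystar (cyc M m)),
              κ r * (intensity d r.1 (xshift d ystar x m n) : ℝ) := by
    intro m h1 h2 n
    rw [← Finset.add_sum_erase _ _ (hcyc m h1 h2)]
  have hEnn : ∀ m n, 0 ≤ ∑ r ∈ Rn.erase (ystar m, ystar (cyc M m)),
      κ r * (intensity d r.1 (xshift d ystar x m n) : ℝ) := by
    intro m n
    apply Finset.sum_nonneg
    intro r hr
    have h1 := hκ r (Finset.mem_of_mem_erase hr)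
    positivity
  have hDpos : ∀ m, 1 ≤ m → m ≤ M → ∀ n,
      0 < (∑ r ∈ Rn, κ r * (intensity d r.1 (xshift d ystar x m n) : ℝ)) - ρ := by
    intro m h1 h2 n
    rw [hDE m h1 h2 n]
    have h3 := hκrm m h1 h2
    have h4 := hI1 m h1 h2 n
    have h5 := hEnn m n
    have h6 := hρκ _ (hcyc m h1 h2)
    nlinarith
  have hF : Tendsto (fun n => ∑ m ∈ Finset.Icc 1 M,
      ∑ r ∈ Rn.erase (ystar m, ystar (cyc M m)),
        (intensity d (ystar m0) (xshift d ystar x m0 n) : ℝ) *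
            (κ r * (intensity d r.1 (xshift d ystar x m n) : ℝ)) /
          (κ (ystar m, ystar (cyc M m)) *
            (intensity d (ystar m) (xshift d ystar x m n) : ℝ)))
      atTop (nhds 0) := by
    have h0 : (0:ℝ) = ∑ m ∈ Finset.Icc 1 M,
        ∑ _r ∈ Rn.erase (ystar m, ystar (cyc M m)), (0:ℝ) := by simp
    rw [h0]
    apply tendsto_finset_sum
    intro m hm
    apply tendsto_finset_sum
    intro r hr
    rw [Finset.mem_Icc] at hm
    have hrRn : (r.1, r.2) ∈ Rn := by
      rw [Prod.mk.eta]; exact Finset.mem_of_mem_erase hr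
    have hrne : (r.1, r.2) ≠ (ystar m, ystar (cyc M m)) := by
      rw [Prod.mk.eta]; exact Finset.ne_of_mem_erase hr
    have h1 := htl m hm.1 hm.2 r.1 r.2 hrRn hrne
    have h2 := h1.const_mul (κ r / κ (ystar m, ystar (cyc M m)))
    rw [mul_zero] at h2
    have heq : (fun n => (intensity d (ystar m0) (xshift d ystar x m0 n) : ℝ) *
            (κ r * (intensity d r.1 (xshift d ystar x m n) : ℝ)) /
          (κ (ystar m, ystar (cyc M m)) *
            (intensity d (ystar m) (xshift d ystar x m n) : ℝ)))
        = (fun n => κ r / κ (ystar m, ystar (cyc M m)) *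
            ((intensity d (ystar m0) (xshift d ystar x m0 n) : ℝ) *
              (intensity d r.1 (xshift d ystar x m n) : ℝ) /
              (intensity d (ystar m) (xshift d ystar x m n) : ℝ))) := by
      funext n; ring
    rw [heq]
    exact h2
  have hρκ0 : 0 < ρ / κ (ystar m0, ystar (cyc M m0)) := div_pos hρ0 (hκrm m0 hm01 hm0M)
  obtain ⟨N, hN⟩ := Filter.eventually_atTop.mp (hF.eventually_lt_const hρκ0)
  refine ⟨N, fun n hn => ⟨fun m hm => ?_, ?_⟩⟩
  · rw [Finset.mem_Icc] at hm
    exact hDpos m hm.1 hm.2 n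
  · set g : ℕ → ℝ := fun m =>
      ((∑ r ∈ Rn, κ r * (intensity d r.1 (xshift d ystar x m n) : ℝ)) - ρ) /
        (κ (ystar m, ystar (cyc M m)) *
          (intensity d (ystar m) (xshift d ystar x m n) : ℝ)) with hg
    have hgpos : ∀ m ∈ Finset.Icc 1 M, 0 < g m := by
      intro m hm
      rw [Finset.mem_Icc] at hm
      apply div_pos (hDpos m hm.1 hm.2 n)
      have := hI1 m hm.1 hm.2 n
      have := hκrm m hm.1 hm.2
      nlinarith
    have hI0pos : (0:ℝ) < (intensity d (ystar m0) (xshift d ystar x m0 n) : ℝ) := by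
      have := hI1 m0 hm01 hm0M n; linarith
    have hA : ∀ m ∈ Finset.Icc 1 M,
        (intensity d (ystar m0) (xshift d ystar x m0 n) : ℝ) * (g m - 1)
          = (∑ r ∈ Rn.erase (ystar m, ystar (cyc M m)),
              (intensity d (ystar m0) (xshift d ystar x m0 n) : ℝ) *
                  (κ r * (intensity d r.1 (xshift d ystar x m n) : ℝ)) /
                (κ (ystar m, ystar (cyc M m)) *
                  (intensity d (ystar m) (xshift d ystar x m n) : ℝ)))
            - ρ * (intensity d (ystar m0) (xshift d ystar x m0 n) : ℝ) /
                (κ (ystar m, ystar (cyc M m)) *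
                  (intensity d (ystar m) (xshift d ystar x m n) : ℝ)) := by
      intro m hm
      rw [Finset.mem_Icc] at hm
      have hκpos := hκrm m hm.1 hm.2
      have hIm := hI1 m hm.1 hm.2 n
      have hc : κ (ystar m, ystar (cyc M m)) *
          (intensity d (ystar m) (xshift d ystar x m n) : ℝ) ≠ 0 := by nlinarith
      rw [hg]
      simp only []
      rw [hDE m hm.1 hm.2 n]
      have hsplit : ∀ E : ℝ,
          (intensity d (ystar m0) (xshift d ystar x m0 n) : ℝ) *
            ((κ (ystar m, ystar (cyc M m)) *
              (intensity d (ystar m) (xshift d ystar x m n) : ℝ) + E - ρ) /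
              (κ (ystar m, ystar (cyc M m)) *
                (intensity d (ystar m) (xshift d ystar x m n) : ℝ)) - 1)
            = (intensity d (ystar m0) (xshift d ystar x m0 n) : ℝ) * E /
                (κ (ystar m, ystar (cyc M m)) *
                  (intensity d (ystar m) (xshift d ystar x m n) : ℝ))
              - ρ * (intensity d (ystar m0) (xshift d ystar x m0 n) : ℝ) /
                (κ (ystar m, ystar (cyc M m)) *
                  (intensity d (ystar m) (xshift d ystar x m n) : ℝ)) := by
        intro E
        field_simp
        ring
      rw [hsplit]
      rw [Finset.mul_sum, Finset.sum_div]
    have hsum : ∑ m ∈ Finset.Icc 1 M, (g m - 1) < 0 := by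
      have hrw : ∑ m ∈ Finset.Icc 1 M,
          ((intensity d (ystar m0) (xshift d ystar x m0 n) : ℝ) * (g m - 1))
          = (∑ m ∈ Finset.Icc 1 M,
              ∑ r ∈ Rn.erase (ystar m, ystar (cyc M m)),
                (intensity d (ystar m0) (xshift d ystar x m0 n) : ℝ) *
                    (κ r * (intensity d r.1 (xshift d ystar x m n) : ℝ)) /
                  (κ (ystar m, ystar (cyc M m)) *
                    (intensity d (ystar m) (xshift d ystar x m n) : ℝ)))
            - ∑ m ∈ Finset.Icc 1 M,
                ρ * (intensity d (ystar m0) (xshift d ystar x m0 n) : ℝ) /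
                  (κ (ystar m, ystar (cyc M m)) *
                    (intensity d (ystar m) (xshift d ystar x m n) : ℝ)) := by
        rw [← Finset.sum_sub_distrib]
        exact Finset.sum_congr rfl hA
      have hFn := hN n hn
      have hsingle : ρ / κ (ystar m0, ystar (cyc M m0)) ≤
          ∑ m ∈ Finset.Icc 1 M,
            ρ * (intensity d (ystar m0) (xshift d ystar x m0 n) : ℝ) /
              (κ (ystar m, ystar (cyc M m)) *
                (intensity d (ystar m) (xshift d ystar x m n) : ℝ)) := by
        have h1 : ρ * (intensity d (ystar m0) (xshift d ystar x m0 n) : ℝ) /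
            (κ (ystar m0, ystar (cyc M m0)) *
              (intensity d (ystar m0) (xshift d ystar x m0 n) : ℝ))
            = ρ / κ (ystar m0, ystar (cyc M m0)) := by
          have hκ0ne : κ (ystar m0, ystar (cyc M m0)) ≠ 0 := ne_of_gt (hκrm m0 hm01 hm0M)
          have hI0ne : (intensity d (ystar m0) (xshift d ystar x m0 n) : ℝ) ≠ 0 :=
            ne_of_gt hI0pos
          field_simp
        rw [← h1]
        apply Finset.single_le_sum (f := fun m =>
          ρ * (intensity d (ystar m0) (xshift d ystar x m0 n) : ℝ) /
            (κ (ystar m, ystar (cyc M m)) *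
              (intensity d (ystar m) (xshift d ystar x m n) : ℝ)))
          (fun m hm => ?_) (Finset.mem_Icc.mpr ⟨hm01, hm0M⟩)
        rw [Finset.mem_Icc] at hm
        have h2 := hκrm m hm.1 hm.2
        have h3 := hI1 m hm.1 hm.2 n
        positivity
      have hB : (intensity d (ystar m0) (xshift d ystar x m0 n) : ℝ) *
          ∑ m ∈ Finset.Icc 1 M, (g m - 1) < 0 := by
        rw [Finset.mul_sum, hrw]
        linarith
      nlinarith
    have hgoal : (∏ m ∈ Finset.Icc 1 M,
        κ (ystar m, ystar (cyc M m)) *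
            (intensity d (ystar m) (xshift d ystar x m n) : ℝ) /
          ((∑ r ∈ Rn, κ r * (intensity d r.1 (xshift d ystar x m n) : ℝ)) - ρ))
        = (∏ m ∈ Finset.Icc 1 M, g m)⁻¹ := by
      rw [← Finset.prod_inv_distrib]
      apply Finset.prod_congr rfl
      intro m hm
      rw [hg]
      simp only []
      rw [inv_div]
    rw [hgoal]
    have hplt : ∏ m ∈ Finset.Icc 1 M, g m < 1 := by
      calc ∏ m ∈ Finset.Icc 1 M, g m
          ≤ ∏ m ∈ Finset.Icc 1 M, Real.exp (g m - 1) := by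
            apply Finset.prod_le_prod
            · intro m hm; exact le_of_lt (hgpos m hm)
            · intro m hm
              have := Real.add_one_le_exp (g m - 1)
              linarith
        _ = Real.exp (∑ m ∈ Finset.Icc 1 M, (g m - 1)) := (Real.exp_sum _ _).symm
        _ < Real.exp 0 := Real.exp_lt_exp.mpr hsum
        _ = 1 := Real.exp_zero
    exact (one_lt_inv₀ (Finset.prod_pos hgpos)).mpr hplt
end

section
/- Let 𝓡 be a weakly reversible reaction network on d species and suppose R = (y*_1 → y*_2, …, y*_M → y*_1) is a strong tier-1 cycle along a tier sequence {x_n} satisfying: (1) x_n − x_0 ∈ span_ℝ{y' − y : y → y' ∈ 𝓡} for every n, and (2) y*_{m_1} < y*_{m_2} componentwise for some m_1, m_2 ∈ {1,…,M}. Let x ∈ ℤ^d_{≥0} satisfy x ≥ y*_1 and (x)_i = c_i for every i ∉ I_{x_n}, where c_i denotes the constant value of (x_n)_i for i ∉ I_{x_n}. Then there exists a tier sequence {x̄_n} ⊆ ℤ^d_{≥0} such that: every x̄_n is reachable from x; R is a strong tier-1 cycle along {x̄_n}; (x̄_n)_i = c_i for every n and every i ∉ I_{x_n}; and there is a subsequence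 {x_{n_k}} of {x_n} with sup_k ‖x̄_k − x_{n_k}‖_∞ < ∞. -/
/-!
Along a subsequence, `x_{n_k} - x_{n_0}` lies in the lattice generated by the reaction vectors:
rounding the real coefficients of `x_n - x_0` down leaves a bounded integer remainder, which takes
some value infinitely often. Put `x̄_k = x + (x_{n_k} - x_{n_0})`. This is a fixed shift of
`x_{n_k}` supported on the diverging coordinates, so it changes every mass-action intensity by a
factor tending to `1`, and the tier and strong tier-1 cycle properties survive. For reachability,
running the cycle from `y*_{m1}` to `y*_{m2} > y*_{m1}` repeatedly makes the state as large as
needed, where weak reversibility lets any lattice vector be added; running the cycle from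
`y*_{m2}` back to `y*_{m1}` as often then brings the state down again.
-/

open Filter Finset

section Intensity

open Asymptotics

def intensityFactor (q a : ℤ) : ℝ :=
  if q ≤ a then (a.toNat.descFactorial q.toNat : ℝ) else 0

theorem intensity_pos_iff {d : ℕ} {y x : Fin d → ℤ} : 0 < intensity d y x ↔ y ≤ x := by
  unfold intensity
  split_ifs with h
  · exact iff_of_true (Finset.prod_pos fun i _ =>
      Nat.descFactorial_pos.2 (Int.toNat_le_toNat (h i))) h
  · exact iff_of_false (lt_irrefl 0) h

theorem intensity_eq_prod {d : ℕ} (y x : Fin d → ℤ) :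
    (intensity d y x : ℝ) = ∏ i, intensityFactor (y i) (x i) := by
  unfold intensity intensityFactor
  split_ifs with h
  · push_cast
    exact Finset.prod_congr rfl fun i _ => (if_pos (h i)).symm
  · obtain ⟨i, hi⟩ := not_forall.1 h
    rw [Nat.cast_zero, Finset.prod_eq_zero (Finset.mem_univ i) (if_neg hi)]

theorem intensityFactor_eq_prod {q a : ℤ} (h : (q.toNat : ℤ) ≤ a) :
    intensityFactor q a = ∏ j ∈ Finset.range q.toNat, ((a : ℝ) - j) := by
  rw [intensityFactor, if_pos ((Int.self_le_toNat q).trans h), Nat.descFactorial_eq_prod_range]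
  push_cast
  refine Finset.prod_congr rfl fun j hj => ?_
  have hq := Finset.mem_range.1 hj
  rw [Nat.cast_sub (by omega),
    show (a.toNat : ℝ) = a by exact_mod_cast Int.toNat_of_nonneg (by omega)]

theorem isEquivalent_intensityFactor_add {a : ℕ → ℤ} (ha : Tendsto a atTop atTop) (q t : ℤ) :
    (fun n => intensityFactor q (a n + t)) ~[atTop] fun n => (a n : ℝ) ^ q.toNat := by
  have hreal : Tendsto (fun n => (a n : ℝ)) atTop atTop := tendsto_intCast_atTop_atTop.comp ha
  have hfactor : ∀ j : ℕ, (fun n => (a n : ℝ) + t - j) ~[atTop] fun n => (a n : ℝ) := fun j => by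
    simpa only [add_sub_assoc] using IsEquivalent.refl.add_const_of_norm_tendsto_atTop
      (c := (t : ℝ) - j) (tendsto_norm_atTop_atTop.comp hreal)
  have hprod := IsEquivalent.finsetProd (s := Finset.range q.toNat)
    (fun j _ => hfactor j)
  simp only [Finset.prod_const, Finset.card_range] at hprod
  refine hprod.congr_left ?_
  filter_upwards [ha.eventually_ge_atTop (q.toNat - t)] with n hn
  rw [intensityFactor_eq_prod (by omega)]
  push_cast
  rfl

theorem isEquivalent_intensity_add {d : ℕ} {z : ℕ → Fin d → ℤ} {v : Fin d → ℤ}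
    (hv : ∀ i, v i = 0 ∨ Tendsto (fun n => z n i) atTop atTop) (y : Fin d → ℤ) :
    (fun n => (intensity d y (z n + v) : ℝ)) ~[atTop] fun n => (intensity d y (z n) : ℝ) := by
  simp only [intensity_eq_prod]
  refine IsEquivalent.finsetProd fun i _ => ?_
  rcases hv i with hvi | hzi
  · simp only [Pi.add_apply, hvi, add_zero]
    exact IsEquivalent.refl
  · simpa only [Pi.add_apply, add_zero] using
      (isEquivalent_intensityFactor_add hzi (y i) (v i)).trans
        (isEquivalent_intensityFactor_add hzi (y i) 0).symm

end Intensity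

section TierSequence

open Asymptotics

variable {d : ℕ} {Rn : Finset ((Fin d → ℤ) × (Fin d → ℤ))} {x : ℕ → Fin d → ℤ}

theorem IsTierSeq.monotone (hx : IsTierSeq d Rn x) : Monotone x := by
  intro a b hab i
  rcases hx.2.2.1 i with ⟨-, hmono⟩ | ⟨c, hc⟩
  · exact hmono hab
  · rw [hc a, hc b]

theorem IsTierSeq.comp_strictMono (hx : IsTierSeq d Rn x) {φ : ℕ → ℕ} (hφ : StrictMono φ) :
    IsTierSeq d Rn (x ∘ φ) := by
  obtain ⟨hnn, ⟨i, hi⟩, hcoord, hratio⟩ := hx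
  have hφT := hφ.tendsto_atTop
  refine ⟨fun n => hnn (φ n), ⟨i, hi.comp hφT⟩, fun j => ?_, fun y y' hy hy' => ?_⟩
  · rcases hcoord j with ⟨hT, hmono⟩ | ⟨c, hc⟩
    · exact Or.inl ⟨hT.comp hφT, hmono.comp hφ.monotone⟩
    · exact Or.inr ⟨c, fun n => hc (φ n)⟩
  · exact (hratio y y' hy hy').imp (·.comp hφT) fun ⟨c, hc⟩ => ⟨c, hc.comp hφT⟩

theorem IsTierSeq.add_const (hx : IsTierSeq d Rn x) {w : Fin d → ℤ}
    (hw : ∀ i, w i = 0 ∨ Tendsto (fun n => x n i) atTop atTop) (hnn : ∀ n, 0 ≤ x n + w) :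
    IsTierSeq d Rn (fun n => x n + w) := by
  obtain ⟨-, ⟨i, hi⟩, hcoord, hratio⟩ := hx
  refine ⟨fun n => hnn n, ⟨i, tendsto_atTop_add_const_right _ _ hi⟩, fun j => ?_,
    fun y y' hy hy' => ?_⟩
  · rcases hcoord j with ⟨hT, hmono⟩ | ⟨c, hc⟩
    · exact Or.inl ⟨tendsto_atTop_add_const_right _ _ hT, fun a b hab => by
        simpa using hmono hab⟩
    · exact Or.inr ⟨c + w j, fun n => by simp [hc n]⟩
  · have hequiv := (isEquivalent_intensity_add hw y).div (isEquivalent_intensity_add hw y')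
    exact (hratio y y' hy hy').imp hequiv.symm.tendsto_atTop
      fun ⟨c, hc⟩ => ⟨c, hequiv.symm.tendsto_nhds hc⟩

variable {M : ℕ} {ystar : ℕ → Fin d → ℤ} {m0 : ℕ}

theorem TierLimits.comp_tendsto (h : TierLimits d Rn M ystar x m0) {φ : ℕ → ℕ}
    (hφ : Tendsto φ atTop atTop) : TierLimits d Rn M ystar (x ∘ φ) m0 :=
  fun m hm hmM y y' hr hne => (h m hm hmM y y' hr hne).comp hφ

theorem xshift_add_const (x : ℕ → Fin d → ℤ) (w : Fin d → ℤ) (m n : ℕ) :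
    xshift d ystar (fun n => x n + w) m n = xshift d ystar x m n + w := by
  funext i
  simp only [xshift, Pi.add_apply]
  ring

theorem TierLimits.add_const (h : TierLimits d Rn M ystar x m0) {w : Fin d → ℤ}
    (hw : ∀ i, w i = 0 ∨ Tendsto (fun n => x n i) atTop atTop) :
    TierLimits d Rn M ystar (fun n => x n + w) m0 := by
  intro m hm hmM y y' hr hne
  have hw' (k : ℕ) (i : Fin d) : w i = 0 ∨ Tendsto (fun n => xshift d ystar x k n i) atTop atTop :=
    (hw i).imp_right (tendsto_atTop_add_const_right _ _)
  have hequiv := ((isEquivalent_intensity_add (hw' m0) (ystar m0)).mul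
    (isEquivalent_intensity_add (hw' m) y)).div (isEquivalent_intensity_add (hw' m) (ystar m))
  simp only [xshift_add_const]
  exact hequiv.symm.tendsto_nhds (h m hm hmM y y' hr hne)

end TierSequence

section Reachability

open Relation

theorem le_add_sub_of_le {α : Type*} [AddCommGroup α] [PartialOrder α] [IsOrderedAddMonoid α]
    {a b c : α} (h : a ≤ b) : c ≤ b + (c - a) :=
  le_add_of_sub_left_le (sub_le_sub_left h c)

theorem reflTransGen_add_nsmul {α : Type*} [AddCommMonoid α] [PartialOrder α]
    [IsOrderedAddMonoid α] {r : α → α → Prop} {y δ b : α} (hδ : 0 ≤ δ)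
    (h : ∀ c, y ≤ c → ReflTransGen r c (c + δ)) (hb : y ≤ b) (U : ℕ) :
    ReflTransGen r b (b + U • δ) := by
  induction U with
  | zero => simpa using ReflTransGen.refl
  | succ U ih =>
    rw [succ_nsmul, ← add_assoc]
    exact ih.trans (h _ (hb.trans (le_add_of_nonneg_right (nsmul_nonneg hδ U))))

theorem cyc_of_lt {M m : ℕ} (h : m < M) : cyc M m = m + 1 := if_neg h.ne

theorem cyc_self (M : ℕ) : cyc M M = 1 := if_pos rfl

variable {d : ℕ} {Rn : Finset ((Fin d → ℤ) × (Fin d → ℤ))}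

theorem Reachable.refl (a : Fin d → ℤ) : Reachable d Rn a a := ReflTransGen.refl

theorem Reachable.trans {a b c : Fin d → ℤ} (hab : Reachable d Rn a b)
    (hbc : Reachable d Rn b c) : Reachable d Rn a c :=
  ReflTransGen.trans hab hbc

theorem reachable_of_mem {r : (Fin d → ℤ) × (Fin d → ℤ)} (hr : r ∈ Rn) {b : Fin d → ℤ}
    (hb : r.1 ≤ b) : Reachable d Rn b (b + (r.2 - r.1)) :=
  .single ⟨r, hr, hb, rfl⟩

theorem reachable_chain {ys : ℕ → Fin d → ℤ} {p q : ℕ} (hpq : p ≤ q)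
    (hys : ∀ j, p ≤ j → j < q → (ys j, ys (j + 1)) ∈ Rn) {b : Fin d → ℤ} (hb : ys p ≤ b) :
    Reachable d Rn b (b + (ys q - ys p)) := by
  induction q, hpq using Nat.le_induction with
  | base => simpa using Reachable.refl b
  | succ q hpq ih =>
    have hstep := reachable_of_mem (hys q hpq q.lt_succ_self) (le_add_sub_of_le hb)
    convert (ih fun j hj hjq => hys j hj (by omega)).trans hstep using 1
    abel

theorem WeaklyReversible.reachable_sub (hwr : WeaklyReversible d Rn)
    {r : (Fin d → ℤ) × (Fin d → ℤ)} (hr : r ∈ Rn) {b : Fin d → ℤ} (hb : r.2 ≤ b) :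
    Reachable d Rn b (b - (r.2 - r.1)) := by
  obtain ⟨K, ys, hK, h1, h2, hys, hlast⟩ := hwr r hr
  rw [← h2] at hb
  have hchain := reachable_chain hK (fun j hj hjK => hys j (by omega) hjK) hb
  have hstep := reachable_of_mem hlast (le_add_sub_of_le hb)
  convert hchain.trans hstep using 1
  rw [← h1, ← h2]
  abel

theorem WeaklyReversible.eventually_reachable_add (hwr : WeaklyReversible d Rn) {s : Fin d → ℤ}
    (hs : s ∈ AddSubgroup.closure {w | ∃ r ∈ Rn, w = r.2 - r.1}) :
    ∀ᶠ b in atTop, Reachable d Rn b (b + s) ∧ Reachable d Rn b (b - s) := by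
  induction hs using AddSubgroup.closure_induction with
  | mem w hw =>
    obtain ⟨r, hr, rfl⟩ := hw
    filter_upwards [eventually_ge_atTop r.1, eventually_ge_atTop r.2] with b h1 h2
    exact ⟨reachable_of_mem hr h1, hwr.reachable_sub hr h2⟩
  | zero => exact Eventually.of_forall fun b => by simpa using Reachable.refl b
  | add s t _ _ hs ht =>
    filter_upwards [hs, (tendsto_atTop_add_const_right _ s tendsto_id).eventually ht,
      (tendsto_atTop_add_const_right _ (-s) tendsto_id).eventually ht] with b hbs hbt hbt'
    constructor
    · convert hbs.1.trans hbt.1 using 1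
      simp only [id]
      abel
    · convert hbs.2.trans hbt'.2 using 1
      simp only [id]
      abel
  | neg s _ hs =>
    exact hs.mono fun b h => by simpa [sub_eq_add_neg, and_comm] using h

variable {M : ℕ} {ystar : ℕ → Fin d → ℤ}

theorem IsCycleIn.reachable (hcyc : IsCycleIn d Rn M ystar) {p q : ℕ} (hp : 1 ≤ p)
    (hpM : p ≤ M) (hq : 1 ≤ q) (hqM : q ≤ M) {b : Fin d → ℤ} (hb : ystar p ≤ b) :
    Reachable d Rn b (b + (ystar q - ystar p)) := by
  have hchain {p' q' : ℕ} (hp' : 1 ≤ p') (hpq : p' ≤ q') (hq' : q' ≤ M) {c : Fin d → ℤ}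
      (hc : ystar p' ≤ c) : Reachable d Rn c (c + (ystar q' - ystar p')) :=
    reachable_chain hpq (fun j hj hjq => by
      simpa [cyc_of_lt (hjq.trans_le hq')] using hcyc j (by omega) (by omega)) hc
  rcases le_or_gt p q with hpq | hqp
  · exact hchain hp hpq hqM hb
  · have hwrap : (ystar M, ystar 1) ∈ Rn := by simpa [cyc_self] using hcyc M (by omega) le_rfl
    have h1 := hchain hp hpM le_rfl hb
    have h2 : Reachable d Rn (b + (ystar M - ystar p))
        (b + (ystar M - ystar p) + (ystar 1 - ystar M)) :=
      reachable_of_mem hwrap (le_add_sub_of_le hb)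
    have h3 := hchain le_rfl hq hqM (c := b + (ystar M - ystar p) + (ystar 1 - ystar M))
      (le_add_sub_of_le (le_add_sub_of_le hb))
    convert h1.trans (h2.trans h3) using 1
    abel

theorem IsCycleIn.reachable_add_of_mem_closure (hcyc : IsCycleIn d Rn M ystar)
    (hwr : WeaklyReversible d Rn) {p m1 m2 : ℕ} (hp : 1 ≤ p) (hpM : p ≤ M) (hm1 : 1 ≤ m1)
    (hm1M : m1 ≤ M) (hm2 : 1 ≤ m2) (hm2M : m2 ≤ M) (hlt : ∀ i, ystar m1 i < ystar m2 i)
    {s b : Fin d → ℤ} (hs : s ∈ AddSubgroup.closure {w | ∃ r ∈ Rn, w = r.2 - r.1})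
    (hb : ystar p ≤ b) (hbs : ystar p ≤ b + s) :
    Reachable d Rn b (b + s) := by
  set δ := ystar m2 - ystar m1 with hδ_def
  have hδ : 0 ≤ δ := fun i => sub_nonneg.2 (hlt i).le
  have hup (c : Fin d → ℤ) (hc : ystar m1 ≤ c) : Reachable d Rn c (c + δ) :=
    hcyc.reachable hm1 hm1M hm2 hm2M hc
  have hdown (c : Fin d → ℤ) (hc : ystar m1 ≤ c) :
      ReflTransGen (Function.swap (ReactStep d Rn)) c (c + δ) := by
    have hc' : ystar m2 ≤ c + δ := by simpa [hδ_def] using add_le_add hc (le_refl δ)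
    refine reflTransGen_swap.2 (show Reachable d Rn (c + δ) c from ?_)
    convert hcyc.reachable hm2 hm2M hm1 hm1M hc' using 1
    rw [hδ_def]
    abel
  obtain ⟨b0, hb0⟩ := eventually_atTop.1 (hwr.eventually_reachable_add hs)
  have hbig : ∀ i, ∀ᶠ U : ℕ in atTop, b0 i ≤ (b + (ystar m1 - ystar p) + U • δ) i := fun i => by
    filter_upwards [tendsto_natCast_atTop_atTop.eventually_ge_atTop
      (b0 i - (b + (ystar m1 - ystar p)) i)] with U hU
    have := hlt i
    have hUi : b0 i ≤ b i + (ystar m1 i - ystar p i) + U * (ystar m2 i - ystar m1 i) := by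
      simp only [Pi.add_apply, Pi.sub_apply] at hU
      nlinarith
    simpa [hδ_def] using hUi
  obtain ⟨U, hU⟩ := (eventually_all.2 hbig).exists
  have h1 := hcyc.reachable hp hpM hm1 hm1M hb
  have h2 : Reachable d Rn _ _ := reflTransGen_add_nsmul hδ hup (le_add_sub_of_le hb) U
  have h3 := (hb0 _ hU).1
  have h4 : Reachable d Rn _ _ :=
    reflTransGen_swap.1 (reflTransGen_add_nsmul hδ hdown (le_add_sub_of_le hbs) U)
  have h5 := hcyc.reachable hm1 hm1M hp hpM (le_add_sub_of_le hbs)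
  have h45 : Reachable d Rn (b + (ystar m1 - ystar p) + U • δ + s) (b + s) := by
    convert h4.trans h5 using 1 <;> abel
  exact h1.trans (h2.trans (h3.trans h45))

end Reachability

section Lattice

variable {ι α : Type*} [Fintype ι]

theorem exists_abs_sub_le_of_mem_span (E : Finset α) (e : α → ι → ℤ) :
    ∃ C : ℤ, ∀ u : ι → ℤ,
      (fun i => (u i : ℝ)) ∈ Submodule.span ℝ {v | ∃ a ∈ E, v = fun i => (e a i : ℝ)} →
      ∃ s ∈ AddSubgroup.closure {w | ∃ a ∈ E, w = e a}, ∀ i, |u i - s i| ≤ C := by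
  refine ⟨∑ a ∈ E, ∑ j, |e a j|, fun u hu => ?_⟩
  have hrange : {v | ∃ a ∈ E, v = fun i => (e a i : ℝ)} =
      Set.range fun a : E => fun i => (e a i : ℝ) := by
    ext v
    simp [eq_comm]
  rw [hrange, Submodule.mem_span_range_iff_exists_fun] at hu
  obtain ⟨c, hc⟩ := hu
  have hgen (a : E) : e a ∈ AddSubgroup.closure {w | ∃ a ∈ E, w = e a} :=
    AddSubgroup.subset_closure ⟨a, a.2, rfl⟩
  refine ⟨∑ a : E, ⌊c a⌋ • e a,
    AddSubgroup.sum_mem _ fun a _ => AddSubgroup.zsmul_mem _ (hgen a) _, fun i => ?_⟩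
  have hfract : ((u i - (∑ a : E, ⌊c a⌋ • e a) i : ℤ) : ℝ) =
      ∑ a : E, Int.fract (c a) * e a i := by
    have hci := congrFun hc i
    simp only [Finset.sum_apply, Pi.smul_apply, smul_eq_mul] at hci
    push_cast [Finset.sum_apply, Pi.smul_apply, smul_eq_mul, ← hci, Int.fract, sub_mul]
    rw [Finset.sum_sub_distrib]
  have hbound : |((u i - (∑ a : E, ⌊c a⌋ • e a) i : ℤ) : ℝ)| ≤
      ((∑ a ∈ E, ∑ j, |e a j| : ℤ) : ℝ) := by
    rw [hfract]
    calc |∑ a : E, Int.fract (c a) * e a i|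
        ≤ ∑ a : E, |(e a i : ℝ)| := (Finset.abs_sum_le_sum_abs _ _).trans <|
          Finset.sum_le_sum fun a _ => by
            rw [abs_mul, abs_of_nonneg (Int.fract_nonneg _)]
            exact mul_le_of_le_one_left (abs_nonneg _) (Int.fract_lt_one _).le
      _ ≤ ∑ a : E, ∑ j, |(e a j : ℝ)| := Finset.sum_le_sum fun a _ =>
          Finset.single_le_sum (f := fun j => |(e a j : ℝ)|) (fun j _ => abs_nonneg _)
            (Finset.mem_univ i)
      _ = _ := by
          push_cast
          exact Finset.sum_coe_sort E fun a => ∑ j, |(e a j : ℝ)|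
  exact_mod_cast hbound

theorem exists_strictMono_sub_mem_closure (E : Finset α) (e : α → ι → ℤ) (x : ℕ → ι → ℤ)
    (hx : ∀ n, (fun i => ((x n i - x 0 i : ℤ) : ℝ)) ∈
      Submodule.span ℝ {v | ∃ a ∈ E, v = fun i => (e a i : ℝ)}) :
    ∃ φ : ℕ → ℕ, StrictMono φ ∧
      ∀ k, x (φ k) - x (φ 0) ∈ AddSubgroup.closure {w | ∃ a ∈ E, w = e a} := by
  classical
  obtain ⟨C, hC⟩ := exists_abs_sub_le_of_mem_span E e
  choose s hs hsC using fun n => hC (x n - x 0) (hx n)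
  let box := Set.Icc (fun _ => -C : ι → ℤ) fun _ => C
  have : Finite box := (Set.finite_Icc _ _).to_subtype
  let rem : ℕ → box := fun n => ⟨x n - x 0 - s n,
    fun i => (abs_le.1 (hsC n i)).1, fun i => (abs_le.1 (hsC n i)).2⟩
  obtain ⟨r, hr⟩ := Finite.exists_infinite_fiber rem
  have hinf : {n | rem n = r}.Infinite := Set.infinite_coe_iff.1 hr
  refine ⟨Nat.nth (rem · = r), Nat.nth_strictMono hinf, fun k => ?_⟩
  have hrem := congrArg Subtype.val
    ((Nat.nth_mem_of_infinite hinf k).trans (Nat.nth_mem_of_infinite hinf 0).symm)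
  have hsub : x (Nat.nth (rem · = r) k) - x (Nat.nth (rem · = r) 0) =
      s (Nat.nth (rem · = r) k) - s (Nat.nth (rem · = r) 0) := by
    linear_combination hrem
  rw [hsub]
  exact sub_mem (hs _) (hs _)

end Lattice

theorem stmt10_general {d M : ℕ}
    (Rn : Finset ((Fin d → ℤ) × (Fin d → ℤ)))
    (hwr : WeaklyReversible d Rn)
    (ystar : ℕ → Fin d → ℤ) (x : ℕ → Fin d → ℤ)
    (htier : IsTierSeq d Rn x)
    (hcycle : IsStrongT1Cycle d Rn M ystar x)
    (hspan : ∀ n, (fun i => ((x n i - x 0 i : ℤ) : ℝ)) ∈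
      Submodule.span ℝ {v : Fin d → ℝ | ∃ r ∈ Rn, v = fun i => ((r.2 i - r.1 i : ℤ) : ℝ)})
    (hlt : ∃ m1 m2, 1 ≤ m1 ∧ m1 ≤ M ∧ 1 ≤ m2 ∧ m2 ≤ M ∧ ∀ i, ystar m1 i < ystar m2 i)
    (xinit : Fin d → ℤ) (hxinit0 : ∀ i, 0 ≤ xinit i)
    (hxinit1 : ∀ i, ystar 1 i ≤ xinit i)
    (hxinit2 : ∀ i, ¬ Tendsto (fun n => x n i) atTop atTop → ∀ n, xinit i = x n i) :
    ∃ xb : ℕ → Fin d → ℤ,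
      IsTierSeq d Rn xb ∧
      (∀ n, Reachable d Rn xinit (xb n)) ∧
      IsStrongT1Cycle d Rn M ystar xb ∧
      (∀ n i, ¬ Tendsto (fun n => x n i) atTop atTop → xb n i = x 0 i) ∧
      ∃ φ : ℕ → ℕ, StrictMono φ ∧ ∃ B : ℤ, ∀ k i, |xb k i - x (φ k) i| ≤ B := by
  obtain ⟨hcyc, -, m0, hm0, hm0M, hlim⟩ := hcycle
  obtain ⟨m1, m2, hm1, hm1M, hm2, hm2M, hlt12⟩ := hlt
  obtain ⟨φ, hφ, hφS⟩ := exists_strictMono_sub_mem_closure Rn (fun r => r.2 - r.1) x hspan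
  set w := xinit - x (φ 0) with hw_def
  have hw (i : Fin d) : w i = 0 ∨ Tendsto (fun k => (x ∘ φ) k i) atTop atTop := by
    by_cases hi : Tendsto (fun n => x n i) atTop atTop
    · exact Or.inr (hi.comp hφ.tendsto_atTop)
    · exact Or.inl (sub_eq_zero.2 (hxinit2 i hi (φ 0)))
  have hxb (k : ℕ) : x (φ k) + w = xinit + (x (φ k) - x (φ 0)) := by
    rw [hw_def]
    abel
  have hle (k : ℕ) : xinit ≤ x (φ k) + w := by
    rw [hxb]
    exact le_add_of_nonneg_right (sub_nonneg.2 (htier.monotone (hφ.monotone k.zero_le)))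
  refine ⟨fun k => x (φ k) + w,
    (htier.comp_strictMono hφ).add_const hw fun k => (show 0 ≤ xinit from hxinit0).trans (hle k),
    fun k => ?_,
    ⟨hcyc, fun k => intensity_pos_iff.2 ((show ystar 1 ≤ xinit from hxinit1).trans (hle k)),
      m0, hm0, hm0M, (hlim.comp_tendsto hφ.tendsto_atTop).add_const hw⟩,
    fun n i hi => ?_, φ, hφ, ∑ i, |w i|, fun k i => ?_⟩
  · change Reachable d Rn xinit (x (φ k) + w)
    rw [hxb]
    exact hcyc.reachable_add_of_mem_closure hwr le_rfl (hm1.trans hm1M) hm1 hm1M hm2 hm2M hlt12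
      (hφS k) hxinit1 (hxb k ▸ (show ystar 1 ≤ xinit from hxinit1).trans (hle k))
  · have := hxinit2 i hi
    simp only [Pi.add_apply, w, Pi.sub_apply, ← this]
    ring
  · simpa using Finset.single_le_sum (f := fun j => |w j|) (fun j _ => abs_nonneg _)
      (Finset.mem_univ i)

/-- Construction of a desired tier sequence: under weak reversibility, the span condition and
the ordering condition, there is a tier sequence of states reachable from `x` along which `R`
is still a strong tier-1 cycle, staying at bounded distance from a subsequence of `{x_n}`. -/
theorem stmt10 {d M : ℕ} (hd : 1 ≤ d) (hM : 1 ≤ M)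
    (Rn : Finset ((Fin d → ℤ) × (Fin d → ℤ))) (hRn : IsRN d Rn)
    (hwr : WeaklyReversible d Rn)
    (ystar : ℕ → Fin d → ℤ) (x : ℕ → Fin d → ℤ)
    (htier : IsTierSeq d Rn x)
    (hcycle : IsStrongT1Cycle d Rn M ystar x)
    (hspan : ∀ n, (fun i => ((x n i - x 0 i : ℤ) : ℝ)) ∈
      Submodule.span ℝ {v : Fin d → ℝ | ∃ r ∈ Rn, v = fun i => ((r.2 i - r.1 i : ℤ) : ℝ)})
    (hlt : ∃ m1 m2, 1 ≤ m1 ∧ m1 ≤ M ∧ 1 ≤ m2 ∧ m2 ≤ M ∧ ∀ i, ystar m1 i < ystar m2 i)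
    (xinit : Fin d → ℤ) (hxinit0 : ∀ i, 0 ≤ xinit i)
    (hxinit1 : ∀ i, ystar 1 i ≤ xinit i)
    (hxinit2 : ∀ i, ¬ Tendsto (fun n => x n i) atTop atTop → ∀ n, xinit i = x n i) :
    ∃ xb : ℕ → Fin d → ℤ,
      IsTierSeq d Rn xb ∧
      (∀ n, Reachable d Rn xinit (xb n)) ∧
      IsStrongT1Cycle d Rn M ystar xb ∧
      (∀ n i, ¬ Tendsto (fun n => x n i) atTop atTop → xb n i = x 0 i) ∧
      ∃ φ : ℕ → ℕ, StrictMono φ ∧ ∃ B : ℤ, ∀ k i, |xb k i - x (φ k) i| ≤ B :=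
  stmt10_general Rn hwr ystar x htier hcycle hspan hlt xinit hxinit0 hxinit1 hxinit2
end
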